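/- arXiv:2004.04447 — 4 statements merged into one kernel-verified Lean document; each statement's English description precedes it below -/
import Mathlib

section
/- Suppose s, r, t, r̄, t̄ ∈ V are lightlike vectors such that s = λr + μt = λ̄r̄ + μ̄t̄ for some nonzero scalars λ, μ, λ̄, μ̄ (so r,t lie in a contact element through s and r̄,t̄ lie in another contact element through s). Set a := λr − λ̄r̄ = μ̄t̄ − μt. If ⟨a,a⟩ ≠ 0 then the Lie inversion σ_a satisfies σ_a(λr) = λ̄r̄ and σ_a(μt) = μ̄t̄. -/
/-- The bilinear form of signature (4,2) on ℝ⁶ (ℝ^{4,2}). -/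
noncomputable def B (x y : Fin 6 → ℝ) : ℝ :=
  -(x 0 * y 0) + x 1 * y 1 + x 2 * y 2 + x 3 * y 3 + x 4 * y 4 - x 5 * y 5

/-- The Lie inversion with respect to the linear sphere complex determined by `a`. -/
noncomputable def lieInv (a x : Fin 6 → ℝ) : Fin 6 → ℝ :=
  x - (2 * B x a / B a a) • a

theorem lieInv_unique_four_spheres (s r t rb tb : Fin 6 → ℝ)
    (hs : B s s = 0) (hr : B r r = 0) (ht : B t t = 0)
    (hrb : B rb rb = 0) (htb : B tb tb = 0)
    (lam mu lamb mub : ℝ) (hlam : lam ≠ 0) (hmu : mu ≠ 0)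
    (hlamb : lamb ≠ 0) (hmub : mub ≠ 0)
    (h1 : s = lam • r + mu • t) (h2 : s = lamb • rb + mub • tb)
    (a : Fin 6 → ℝ) (hadef : a = lam • r - lamb • rb) (ha : B a a ≠ 0) :
    lieInv a (lam • r) = lamb • rb ∧ lieInv a (mu • t) = mub • tb := by
  have h3 : lam • r + mu • t = lamb • rb + mub • tb := h1 ▸ h2
  have hadef2 : a = mub • tb - mu • t := by
    funext i
    have := congrFun h3 i
    have := congrFun hadef i
    simp only [Pi.add_apply, Pi.sub_apply, Pi.smul_apply, smul_eq_mul] at *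
    linarith
  have key1 : B (lam • r) a = B a a / 2 := by
    subst hadef
    simp only [B, Pi.sub_apply, Pi.smul_apply, smul_eq_mul] at hr hrb ⊢
    linear_combination (lam ^ 2 / 2) * hr + (-(lamb ^ 2) / 2) * hrb
  have key2 : B (mu • t) a = -(B a a) / 2 := by
    rw [hadef2]
    simp only [B, Pi.sub_apply, Pi.smul_apply, smul_eq_mul] at ht htb ⊢
    linear_combination (-(mu ^ 2) / 2) * ht + (mub ^ 2 / 2) * htb
  constructor
  · rw [lieInv, key1]
    have : 2 * (B a a / 2) / B a a = 1 := by field_simp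
    rw [this, one_smul, hadef]
    abel
  · rw [lieInv, key2]
    have : 2 * (-(B a a) / 2) / B a a = -1 := by field_simp
    rw [this, neg_one_smul, sub_neg_eq_add, hadef2]
    abel
end

section
/- Let r_i, r_j, r_k, r_l ∈ V be lightlike with r_i − r_j + r_k − r_l = 0, n¹ = r_i − r_j, n² = r_i − r_l, with ⟨n¹,n¹⟩, ⟨n²,n²⟩ ≠ 0 and ⟨r_i,r_j⟩ ≠ 0, ⟨r_i,r_l⟩ ≠ 0. Then the identity ⟨r_i,r_j⟩⟨n²,n²⟩ / (2⟨r_i,n²⟩⟨r_j,n²⟩) = −⟨n¹,n¹⟩/⟨n²,n²⟩ holds; in particular, the cross-ratio of the quadrilateral equals −⟨n¹,n¹⟩/⟨n²,n²⟩. -/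
lemma B_symm (x y : Fin 6 → ℝ) : B x y = B y x := by simp [B]; ring

lemma B_sub_left (x y z : Fin 6 → ℝ) : B (x - y) z = B x z - B y z := by
  simp [B, Pi.sub_apply]; ring

lemma B_sub_right (x y z : Fin 6 → ℝ) : B x (y - z) = B x y - B x z := by
  simp [B, Pi.sub_apply]; ring

lemma B_add_left (x y z : Fin 6 → ℝ) : B (x + y) z = B x z + B y z := by
  simp [B, Pi.add_apply]; ring

lemma B_add_right (x y z : Fin 6 → ℝ) : B x (y + z) = B x y + B x z := by
  simp [B, Pi.add_apply]; ring

theorem cross_ratio_formula (ri rj rk rl : Fin 6 → ℝ)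
    (hi : B ri ri = 0) (hj : B rj rj = 0) (hk : B rk rk = 0) (hl : B rl rl = 0)
    (hquad : ri - rj + rk - rl = 0)
    (hn1 : B (ri - rj) (ri - rj) ≠ 0) (hn2 : B (ri - rl) (ri - rl) ≠ 0)
    (hij : B ri rj ≠ 0) (hil : B ri rl ≠ 0) :
    B ri rj * B (ri - rl) (ri - rl) /
      (2 * B ri (ri - rl) * B rj (ri - rl)) =
    -(B (ri - rj) (ri - rj)) / B (ri - rl) (ri - rl) := by
  have hrk : rk = rl + rj - ri := by
    have := hquad
    funext t
    have h := congrFun hquad t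
    simp [Pi.sub_apply, Pi.add_apply, Pi.zero_apply] at h ⊢
    linarith
  -- key relation from rk lightlike
  have key : B rj rl = B ri rl + B ri rj := by
    rw [hrk] at hk
    simp only [B_sub_left, B_sub_right, B_add_left, B_add_right] at hk
    rw [B_symm rl rj, B_symm rl ri, B_symm rj ri] at hk
    linarith
  have h2 : B (ri - rl) (ri - rl) = -(2 * B ri rl) := by
    simp only [B_sub_left, B_sub_right]
    rw [B_symm rl ri]
    linarith
  have h1 : B (ri - rj) (ri - rj) = -(2 * B ri rj) := by
    simp only [B_sub_left, B_sub_right]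
    rw [B_symm rj ri]
    linarith
  have hin2 : B ri (ri - rl) = -(B ri rl) := by
    simp only [B_sub_right]; linarith
  have hjn2 : B rj (ri - rl) = -(B ri rl) := by
    simp only [B_sub_right]
    rw [B_symm rj ri]
    linarith
  rw [h1, h2, hin2, hjn2]
  field_simp
end

section
/- Let μ_i, μ_j, μ_k, μ_l ∈ V be lightlike vectors with δμ_{ik} := μ_k − μ_i and δμ_{jl} := μ_l − μ_j parallel (δμ_{ik} = c·δμ_{jl} for some c ∈ ℝ) and ⟨δμ_{ik}, δμ_{ik}⟩ ≠ 0 (Moutard lift of a nondegenerate quadrilateral). Then the Lie inversion σ with respect to δμ_{ik} satisfies σ(μ_i) = μ_k and σ(μ_j) = μ_l; i.e., it diagonally interchanges the four spheres. -/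
theorem moutard_lift_diagonal_inversion (mi mj mk ml : Fin 6 → ℝ)
    (hi : B mi mi = 0) (hj : B mj mj = 0) (hk : B mk mk = 0) (hl : B ml ml = 0)
    (c : ℝ) (hpar : mk - mi = c • (ml - mj))
    (hd : B (mk - mi) (mk - mi) ≠ 0) :
    lieInv (mk - mi) mi = mk ∧ lieInv (mk - mi) mj = ml := by
  have h1 : B (mk - mi) (mk - mi) = -(2 * B mi mk) := by
    simp only [B, Pi.sub_apply] at hi hk ⊢
    linear_combination hi + hk
  have h2 : B mi (mk - mi) = B mi mk := by
    simp only [B, Pi.sub_apply] at hi ⊢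
    linear_combination -hi
  have hik : B mi mk ≠ 0 := fun h => hd (by rw [h1, h]; ring)
  have hc : c ≠ 0 := by
    intro h
    apply hd
    rw [hpar, h, zero_smul]
    simp [B]
  have h3 : B mj (mk - mi) = c * B mj ml := by
    rw [hpar]
    simp only [B, Pi.smul_apply, Pi.sub_apply, smul_eq_mul] at hj ⊢
    linear_combination -c * hj
  have h4 : B (mk - mi) (mk - mi) = c ^ 2 * (-(2 * B mj ml)) := by
    rw [hpar]
    simp only [B, Pi.smul_apply, Pi.sub_apply, smul_eq_mul] at hj hl ⊢
    linear_combination c ^ 2 * hj + c ^ 2 * hl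
  have hjl : B mj ml ≠ 0 := by
    intro h
    apply hd
    rw [h4, h]; ring
  constructor
  · have hs : 2 * B mi (mk - mi) / B (mk - mi) (mk - mi) = -1 := by
      rw [h1, h2]
      field_simp
    rw [lieInv, hs, neg_one_smul]
    abel
  · have hs : 2 * B mj (mk - mi) / B (mk - mi) (mk - mi) = -(1 / c) := by
      rw [h3, h4]
      field_simp
    rw [lieInv, hs, neg_smul, sub_neg_eq_add, hpar, smul_smul, one_div,
      inv_mul_cancel₀ hc, one_smul]
    abel
end

section
/- Let r_j, r_k, s ∈ V be lightlike, pairwise linearly independent, with ⟨r_j, r_k⟩ ≠ 0 and ⟨s, r_k⟩ ≠ 0. Let n_α := r_j − r_k and n_β := r_j − λ_β r_k with λ_β ≠ 0, and assume ⟨n_α,n_α⟩ ≠ 0, ⟨n_β,n_β⟩ ≠ 0. If σ_{n_α}(s) and σ_{n_β}(s) are linearly dependent (span the same line), then λ_β = 1, i.e., n_α = n_β. -/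
/-!
For `n_λ = r_j - λ r_k` with `r_j, r_k` lightlike one has `⟨n_λ, n_λ⟩ = -2λ⟨r_j, r_k⟩`, so
`σ_{n_λ}(s) = s - κ(λ) n_λ` with `κ(λ) = (λ⟨s, r_k⟩ - ⟨s, r_j⟩) / (λ⟨r_j, r_k⟩)`.
Comparing the coefficients of `s` and `r_k` in `σ_{n_λ}(s) = c σ_{n_1}(s)` against the
independent triple `r_j, r_k, s` gives `c = 1` and `λ κ(λ) = κ(1)`, that is `λ⟨s, r_k⟩ = ⟨s, r_k⟩`.
-/

theorem LinearIndependent.mul_eq_of_sub_smul_eq_smul_sub {R M : Type*} [CommRing R]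
    [AddCommGroup M] [Module R M] {u v w : M} (hind : LinearIndependent R ![u, v, w])
    {a b c l : R} (h : w - a • (u - l • v) = c • (w - b • (u - v))) : a * l = b := by
  have hcomb : (c * b - a) • u + (a * l - c * b) • v + (1 - c) • w = 0 := by
    rw [← sub_eq_zero.mpr h]
    module
  have hcoeff := Fintype.linearIndependent_iff.mp hind ![c * b - a, a * l - c * b, 1 - c]
    (by simpa [Fin.sum_univ_three] using hcomb)
  have hc : c = 1 := (sub_eq_zero.mp (by simpa using hcoeff 2)).symm
  simpa [hc, sub_eq_zero] using hcoeff 1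

section Pencil

variable {u v : Fin 6 → ℝ}

lemma B_sub_smul_right (x : Fin 6 → ℝ) (l : ℝ) : B x (u - l • v) = B x u - l * B x v := by
  simp only [B, Pi.sub_apply, Pi.smul_apply, smul_eq_mul]
  ring

lemma B_sub_smul_self (hu : B u u = 0) (hv : B v v = 0) (l : ℝ) :
    B (u - l • v) (u - l • v) = -2 * (l * B u v) := by
  simp only [B, Pi.sub_apply, Pi.smul_apply, smul_eq_mul] at *
  linear_combination hu + l ^ 2 * hv

lemma lieInv_sub_smul (hu : B u u = 0) (hv : B v v = 0) (l : ℝ) (x : Fin 6 → ℝ) :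
    lieInv (u - l • v) x = x - ((l * B x v - B x u) / (l * B u v)) • (u - l • v) := by
  rw [lieInv, B_sub_smul_self hu hv, B_sub_smul_right,
    show 2 * (B x u - l * B x v) = -2 * (l * B x v - B x u) by ring,
    mul_div_mul_left _ _ (by norm_num : (-2 : ℝ) ≠ 0)]

end Pencil

theorem inversion_family_rigidity_general (rj rk s : Fin 6 → ℝ)
    (hj : B rj rj = 0) (hk : B rk rk = 0)
    (hind : LinearIndependent ℝ ![rj, rk, s])
    (hjk : B rj rk ≠ 0) (hsk : B s rk ≠ 0)
    (lamb : ℝ) (hlamb : lamb ≠ 0)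
    (hdep : ∃ c : ℝ, lieInv (rj - lamb • rk) s = c • lieInv (rj - rk) s) :
    lamb = 1 := by
  obtain ⟨c, hc⟩ := hdep
  have h1 := lieInv_sub_smul hj hk 1 s
  rw [one_smul] at h1
  rw [lieInv_sub_smul hj hk, h1] at hc
  have hcoeff := hind.mul_eq_of_sub_smul_eq_smul_sub hc
  field_simp at hcoeff
  have hfactor : (lamb - 1) * B s rk = 0 := by linear_combination hcoeff
  simpa [sub_eq_zero, hsk] using hfactor

theorem inversion_family_rigidity (rj rk s : Fin 6 → ℝ)
    (hj : B rj rj = 0) (hk : B rk rk = 0) (hs : B s s = 0)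
    (hind : LinearIndependent ℝ ![rj, rk, s])
    (hjk : B rj rk ≠ 0) (hsk : B s rk ≠ 0)
    (lamb : ℝ) (hlamb : lamb ≠ 0)
    (hna : B (rj - rk) (rj - rk) ≠ 0)
    (hnb : B (rj - lamb • rk) (rj - lamb • rk) ≠ 0)
    (hdep : ∃ c : ℝ, lieInv (rj - lamb • rk) s = c • lieInv (rj - rk) s) :
    lamb = 1 :=
  inversion_family_rigidity_general rj rk s hj hk hind hjk hsk lamb hlamb hdep
end
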